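/- Let Q be an N×N real symmetric matrix with Q·1 = 1 and suppose there exists λ ∈ [0, 1) such that ‖Q v‖ ≤ λ‖v‖ for every v ∈ ℝ^N with 1ᵀv = 0 (Euclidean norm). Let (d(t))_{t≥1} be a sequence in ℝ^N with d(t) → 0, and suppose the series of averages Σ_{t=1}^∞ (1/N)·1ᵀd(t) converges to a real number S. Then the sequence defined by u(t+1) = Q u(t) + d(t+1) converges as t → ∞ to (ū(0) + S)·1, where ū(0) = (1/N)·1ᵀu(0). -/

import Mathlib

open Filter

/-- The Euclidean norm of a vector in `ℝ^N`. -/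
noncomputable def eNorm {N : ℕ} (v : Fin N → ℝ) : ℝ :=
  Real.sqrt (∑ i, v i ^ 2)

lemma eNorm_eq_norm {N : ℕ} (v : Fin N → ℝ) :
    eNorm v = ‖(WithLp.equiv 2 (Fin N → ℝ)).symm v‖ := by
  rw [EuclideanSpace.norm_eq]
  simp [eNorm, Real.norm_eq_abs, sq_abs]

lemma eNorm_nonneg {N : ℕ} (v : Fin N → ℝ) : 0 ≤ eNorm v :=
  Real.sqrt_nonneg _

lemma eNorm_add_le {N : ℕ} (v w : Fin N → ℝ) :
    eNorm (v + w) ≤ eNorm v + eNorm w := by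
  simp only [eNorm_eq_norm]
  exact norm_add_le ((WithLp.equiv 2 (Fin N → ℝ)).symm v) ((WithLp.equiv 2 (Fin N → ℝ)).symm w)

lemma abs_le_eNorm {N : ℕ} (v : Fin N → ℝ) (i : Fin N) : |v i| ≤ eNorm v := by
  rw [eNorm, ← Real.sqrt_sq_eq_abs]
  exact Real.sqrt_le_sqrt (Finset.single_le_sum (fun j _ => sq_nonneg (v j)) (Finset.mem_univ i))

lemma iss_lemma {a b : ℕ → ℝ} {lam : ℝ} (hl0 : 0 ≤ lam) (hl1 : lam < 1)
    (ha : ∀ t, 0 ≤ a t) (hrec : ∀ t, a (t + 1) ≤ lam * a t + b (t + 1))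
    (hb : Tendsto b atTop (nhds 0)) : Tendsto a atTop (nhds 0) := by
  rw [Metric.tendsto_atTop] at hb ⊢
  intro ε hε
  have hc : 0 < (1 - lam) * ε / 2 := by
    have : 0 < 1 - lam := by linarith
    positivity
  obtain ⟨T, hT⟩ := hb _ hc
  have key : ∀ k, a (T + k) ≤ lam ^ k * a T + ε / 2 := by
    intro k
    induction k with
    | zero => simp; linarith [ha T]
    | succ k ih =>
        have hb' : b (T + k + 1) ≤ (1 - lam) * ε / 2 := by
          have h := hT (T + k + 1) (by omega)
          rw [Real.dist_eq, sub_zero] at h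
          exact le_of_lt (lt_of_abs_lt h)
        have h2 : lam * a (T + k) ≤ lam * (lam ^ k * a T + ε / 2) :=
          mul_le_mul_of_nonneg_left ih hl0
        calc a (T + (k + 1)) = a (T + k + 1) := by rfl
          _ ≤ lam * a (T + k) + b (T + k + 1) := hrec _
          _ ≤ lam * (lam ^ k * a T + ε / 2) + (1 - lam) * ε / 2 := add_le_add h2 hb'
          _ = lam ^ (k + 1) * a T + (lam * ε / 2 + (1 - lam) * ε / 2) := by ring
          _ ≤ lam ^ (k + 1) * a T + ε / 2 := by nlinarith
  have hpow : Tendsto (fun k : ℕ => lam ^ k * a T) atTop (nhds 0) := by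
    simpa using (tendsto_pow_atTop_nhds_zero_of_lt_one hl0 hl1).mul_const (a T)
  rw [Metric.tendsto_atTop] at hpow
  obtain ⟨K, hK⟩ := hpow (ε / 2) (by positivity)
  refine ⟨T + K, fun t ht => ?_⟩
  rw [Real.dist_eq, sub_zero, abs_of_nonneg (ha t)]
  have hte : t = T + (t - T) := by omega
  have h3 := hK (t - T) (by omega)
  rw [Real.dist_eq, sub_zero] at h3
  have h4 := lt_of_abs_lt h3
  have h5 := key (t - T)
  rw [hte]
  linarith

/-- Input-driven average consensus: if `Q` is a symmetric consensus matrix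
(`Q·1 = 1`, contracting the subspace orthogonal to `1` with factor `λ < 1` in
Euclidean norm), `d(t) → 0`, and the series of averages
`Σ_{t=1}^∞ (1/N)·1ᵀ d(t)` converges to `S`, then the recursion
`u(t+1) = Q u(t) + d(t+1)` converges to `(ū(0) + S)·1`. -/
theorem input_driven_consensus_converges
    {N : ℕ} (Q : Matrix (Fin N) (Fin N) ℝ)
    (hQsymm : Q.transpose = Q)
    (hQone : Q.mulVec (fun _ => (1 : ℝ)) = fun _ => (1 : ℝ))
    (lam : ℝ) (hlam0 : 0 ≤ lam) (hlam1 : lam < 1)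
    (hcontract : ∀ v : Fin N → ℝ, (∑ i, v i) = 0 →
      eNorm (Q.mulVec v) ≤ lam * eNorm v)
    (d : ℕ → Fin N → ℝ)
    (hd : Tendsto d atTop (nhds 0))
    (S : ℝ)
    (hS : Tendsto (fun T : ℕ => ∑ t ∈ Finset.range T, (∑ i, d (t + 1) i) / (N : ℝ))
      atTop (nhds S))
    (u : ℕ → Fin N → ℝ)
    (hu : ∀ t, u (t + 1) = Q.mulVec (u t) + d (t + 1)) :
    Tendsto u atTop
      (nhds (fun _ => (∑ i, u 0 i) / (N : ℝ) + S)) := by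
  rcases Nat.eq_zero_or_pos N with hN | hN
  · subst hN
    haveI : Unique (Fin 0 → ℝ) := Pi.uniqueOfIsEmpty _
    exact tendsto_const_nhds.congr fun t => Subsingleton.elim _ _
  have hNr : (0 : ℝ) < N := by exact_mod_cast hN
  -- row and column sums
  have hrow : ∀ j, ∑ i, Q j i = 1 := by
    intro j
    have := congrFun hQone j
    simpa [Matrix.mulVec, dotProduct] using this
  have hcol : ∀ j, ∑ i, Q i j = 1 := by
    intro j
    have h : ∀ i, Q i j = Q j i := by
      intro i
      have := congrFun (congrFun hQsymm i) j
      simpa [Matrix.transpose_apply] using this.symm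
    rw [Finset.sum_congr rfl fun i _ => h i]
    exact hrow j
  have hsum : ∀ v : Fin N → ℝ, ∑ i, Q.mulVec v i = ∑ i, v i := by
    intro v
    simp only [Matrix.mulVec, dotProduct]
    rw [Finset.sum_comm]
    refine Finset.sum_congr rfl fun j _ => ?_
    rw [← Finset.sum_mul, hcol j, one_mul]
  set aseq : ℕ → ℝ := fun t => (∑ i, u t i) / N with haseq
  set w : ℕ → Fin N → ℝ := fun t i => u t i - aseq t with hw
  set δ : ℕ → Fin N → ℝ := fun t i => d t i - (∑ j, d t j) / N with hδ
  have hA : ∀ t, aseq (t + 1) = aseq t + (∑ j, d (t + 1) j) / N := by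
    intro t
    simp only [haseq, hu t, Pi.add_apply, Finset.sum_add_distrib, hsum, add_div]
  have hwsum : ∀ t, ∑ i, w t i = 0 := by
    intro t
    simp only [hw, Finset.sum_sub_distrib, Finset.sum_const, Finset.card_univ,
      Fintype.card_fin, nsmul_eq_mul, haseq]
    field_simp
    ring
  have hwrec : ∀ t, w (t + 1) = Q.mulVec (w t) + δ (t + 1) := by
    intro t
    funext i
    have hQw : Q.mulVec (w t) i = Q.mulVec (u t) i - aseq t := by
      simp only [Matrix.mulVec, dotProduct, hw, mul_sub,
        Finset.sum_sub_distrib, ← Finset.sum_mul, hrow i, one_mul]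
    have : w (t + 1) i = u (t + 1) i - aseq (t + 1) := rfl
    rw [Pi.add_apply, hQw, this, hu t, hA t, Pi.add_apply]
    simp only [hδ]
    ring
  have hnorm : ∀ t, eNorm (w (t + 1)) ≤ lam * eNorm (w t) + eNorm (δ (t + 1)) := by
    intro t
    rw [hwrec t]
    calc eNorm (Q.mulVec (w t) + δ (t + 1))
        ≤ eNorm (Q.mulVec (w t)) + eNorm (δ (t + 1)) := eNorm_add_le _ _
      _ ≤ lam * eNorm (w t) + eNorm (δ (t + 1)) :=
          add_le_add_left (hcontract (w t) (hwsum t)) _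
  have hcomp : ∀ i, Tendsto (fun t => d t i) atTop (nhds 0) := by
    rw [tendsto_pi_nhds] at hd
    intro i
    simpa using hd i
  have hsumd : Tendsto (fun t => (∑ j, d t j) / (N : ℝ)) atTop (nhds 0) := by
    have h1 : Tendsto (fun t => ∑ j, d t j) atTop (nhds 0) := by
      have := tendsto_finset_sum Finset.univ (fun j _ => hcomp j)
      simpa using this
    simpa using h1.div_const (N : ℝ)
  have hδcomp : ∀ i, Tendsto (fun t => δ t i) atTop (nhds 0) := by
    intro i
    have := (hcomp i).sub hsumd
    simpa [hδ] using this
  have hδ0 : Tendsto (fun t => eNorm (δ t)) atTop (nhds 0) := by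
    have hsq : Tendsto (fun t => ∑ i, δ t i ^ 2) atTop (nhds 0) := by
      have := tendsto_finset_sum Finset.univ
        (fun i (_ : i ∈ Finset.univ) => by
          have h := (hδcomp i).mul (hδcomp i)
          simpa [sq] using h)
      simpa [sq] using this
    have := (Real.continuous_sqrt.tendsto 0).comp hsq
    simpa [eNorm, Function.comp_def] using this
  have hwn : Tendsto (fun t => eNorm (w t)) atTop (nhds 0) :=
    iss_lemma hlam0 hlam1 (fun t => eNorm_nonneg _) hnorm hδ0
  have hwi : ∀ i, Tendsto (fun t => w t i) atTop (nhds 0) := by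
    intro i
    exact squeeze_zero_norm (fun t => abs_le_eNorm (w t) i) hwn
  have hApart : ∀ T, aseq T = aseq 0 + ∑ t ∈ Finset.range T, (∑ i, d (t + 1) i) / N := by
    intro T
    induction T with
    | zero => simp
    | succ T ih => rw [hA T, ih, Finset.sum_range_succ]; ring
  have hAlim : Tendsto aseq atTop (nhds (aseq 0 + S)) := by
    have h0 : Tendsto (fun _ : ℕ => aseq 0) atTop (nhds (aseq 0)) := tendsto_const_nhds
    exact ((h0.add hS).congr fun T => (hApart T).symm)
  rw [tendsto_pi_nhds]
  intro i
  have h := hAlim.add (hwi i)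
  rw [add_zero] at h
  exact h.congr fun t => by simp [hw]
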